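/- arXiv:2402.10317 — 2 statements merged into one kernel-verified Lean document; each statement's English description precedes it below -/
import Mathlib

section
/- Let w : ℝ⁴ → ℝ be a smooth function satisfying the general heavenly equation (λ₂-λ₄)(λ₁-λ₃)w₁₃w₂₄ - (λ₃-λ₄)(λ₁-λ₂)w₁₂w₃₄ - (λ₂-λ₃)(λ₁-λ₄)w₁₄w₂₃ = 0, where subscripts denote partial derivatives and λ₁,λ₂,λ₃,λ₄ are pairwise distinct real constants. Then the pair u = w₁ (= ∂w/∂x¹) and v = w₂ (= ∂w/∂x²) satisfies the first equation of the two-component system: (λ₃-λ₄)(λ₁-λ₂)v₁u₂u₃₄ + (λ₂-λ₃)(λ₁-λ₄)(v₁u₄u₂₃ - v₃u₄u₁₂ + v₃u₂u₁₄) - (λ₂-λ₄)(λ₁-λ₃)(v₁u₃u₂₄ - v₄u₃u₁₂ + v₄u₂u₁₃) = 0. -/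
/-- Partial derivative of `f : ℝ⁴ → ℝ` in the `i`-th coordinate direction. -/
noncomputable def pd (i : Fin 4) (f : (Fin 4 → ℝ) → ℝ) (x : Fin 4 → ℝ) : ℝ :=
  fderiv ℝ f x (Pi.single i 1)

lemma pd_contDiff {f : (Fin 4 → ℝ) → ℝ} (hf : ContDiff ℝ (⊤ : ℕ∞) f) (i : Fin 4) :
    ContDiff ℝ (⊤ : ℕ∞) (pd i f) := by
  unfold pd
  exact (hf.fderiv_right (by simp)).clm_apply contDiff_const

lemma pd_comm {f : (Fin 4 → ℝ) → ℝ} (hf : ContDiff ℝ (⊤ : ℕ∞) f) (i j : Fin 4) (x : Fin 4 → ℝ) :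
    pd i (pd j f) x = pd j (pd i f) x := by
  have h1 : ∀ y, HasFDerivAt f (fderiv ℝ f y) y := fun y =>
    (hf.differentiable (by simp) y).hasFDerivAt
  have hd : ContDiff ℝ (⊤ : ℕ∞) (fderiv ℝ f) := hf.fderiv_right (by simp)
  have h2 : HasFDerivAt (fderiv ℝ f) (fderiv ℝ (fderiv ℝ f) x) x :=
    (hd.differentiable (by simp) x).hasFDerivAt
  have hsymm := second_derivative_symmetric h1 h2 (Pi.single j 1) (Pi.single i 1)
  unfold pd
  rw [fderiv_clm_apply (hd.differentiable (by simp) x) (differentiableAt_const _),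
      fderiv_clm_apply (hd.differentiable (by simp) x) (differentiableAt_const _)]
  simp [hsymm]

lemma pd_expand (c1 c2 c3 : ℝ) {f1 g1 f2 g2 f3 g3 : (Fin 4 → ℝ) → ℝ}
    (h1 : ContDiff ℝ (⊤ : ℕ∞) f1) (k1 : ContDiff ℝ (⊤ : ℕ∞) g1)
    (h2 : ContDiff ℝ (⊤ : ℕ∞) f2) (k2 : ContDiff ℝ (⊤ : ℕ∞) g2)
    (h3 : ContDiff ℝ (⊤ : ℕ∞) f3) (k3 : ContDiff ℝ (⊤ : ℕ∞) g3) (i : Fin 4) (x : Fin 4 → ℝ) :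
    pd i (fun y => c1 * (f1 y * g1 y) - c2 * (f2 y * g2 y) - c3 * (f3 y * g3 y)) x
      = c1 * (pd i f1 x * g1 x + f1 x * pd i g1 x)
        - c2 * (pd i f2 x * g2 x + f2 x * pd i g2 x)
        - c3 * (pd i f3 x * g3 x + f3 x * pd i g3 x) := by
  have d : ∀ {f : (Fin 4 → ℝ) → ℝ}, ContDiff ℝ (⊤ : ℕ∞) f → DifferentiableAt ℝ f x :=
    fun h => h.differentiable (by simp) x
  have H :=
    (((((d h1).hasFDerivAt.mul (d k1).hasFDerivAt).const_mul c1).sub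
      (((d h2).hasFDerivAt.mul (d k2).hasFDerivAt).const_mul c2)).sub
      (((d h3).hasFDerivAt.mul (d k3).hasFDerivAt).const_mul c3)).fderiv
  unfold pd
  rw [show (fun y => c1 * (f1 y * g1 y) - c2 * (f2 y * g2 y) - c3 * (f3 y * g3 y)) = (((fun y => c1 * (f1 * g1) y) - fun y => c2 * (f2 * g2) y) - fun y => c3 * (f3 * g3) y) from rfl, H]
  simp [ContinuousLinearMap.sub_apply, ContinuousLinearMap.smul_apply,
    ContinuousLinearMap.add_apply, smul_eq_mul]
  ring

theorem stmt0 (l1 l2 l3 l4 : ℝ)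
    (hd : l1 ≠ l2 ∧ l1 ≠ l3 ∧ l1 ≠ l4 ∧ l2 ≠ l3 ∧ l2 ≠ l4 ∧ l3 ≠ l4)
    (w : (Fin 4 → ℝ) → ℝ) (hw : ContDiff ℝ (⊤ : ℕ∞) w)
    (heav : ∀ x, (l2 - l4) * (l1 - l3) * pd 0 (pd 2 w) x * pd 1 (pd 3 w) x
      - (l3 - l4) * (l1 - l2) * pd 0 (pd 1 w) x * pd 2 (pd 3 w) x
      - (l2 - l3) * (l1 - l4) * pd 0 (pd 3 w) x * pd 1 (pd 2 w) x = 0)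
    (u v : (Fin 4 → ℝ) → ℝ) (hu : u = pd 0 w) (hv : v = pd 1 w) :
    ∀ x,
      (l3 - l4) * (l1 - l2) * (pd 0 v x * pd 1 u x * pd 2 (pd 3 u) x)
      + (l2 - l3) * (l1 - l4) * (pd 0 v x * pd 3 u x * pd 1 (pd 2 u) x
          - pd 2 v x * pd 3 u x * pd 0 (pd 1 u) x
          + pd 2 v x * pd 1 u x * pd 0 (pd 3 u) x)
      - (l2 - l4) * (l1 - l3) * (pd 0 v x * pd 2 u x * pd 1 (pd 3 u) x
          - pd 3 v x * pd 2 u x * pd 0 (pd 1 u) x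
          + pd 3 v x * pd 1 u x * pd 0 (pd 2 u) x) = 0 := by
  subst hu hv
  intro x
  have hP : ∀ j : Fin 4, ContDiff ℝ (⊤ : ℕ∞) (pd j w) := fun j => pd_contDiff hw j
  have hPP : ∀ i j : Fin 4, ContDiff ℝ (⊤ : ℕ∞) (pd i (pd j w)) := fun i j => pd_contDiff (hP j) i
  -- the heavenly LHS as a function, identically zero
  have hH : (fun y => (l2 - l4) * (l1 - l3) * (pd 0 (pd 2 w) y * pd 1 (pd 3 w) y)
      - (l3 - l4) * (l1 - l2) * (pd 0 (pd 1 w) y * pd 2 (pd 3 w) y)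
      - (l2 - l3) * (l1 - l4) * (pd 0 (pd 3 w) y * pd 1 (pd 2 w) y)) = (fun _ => (0 : ℝ)) := by
    funext y
    linear_combination heav y
  have hE0 : pd 0 (fun y => (l2 - l4) * (l1 - l3) * (pd 0 (pd 2 w) y * pd 1 (pd 3 w) y)
      - (l3 - l4) * (l1 - l2) * (pd 0 (pd 1 w) y * pd 2 (pd 3 w) y)
      - (l2 - l3) * (l1 - l4) * (pd 0 (pd 3 w) y * pd 1 (pd 2 w) y)) x = 0 := by
    rw [hH]; simp [pd]
  rw [pd_expand ((l2 - l4) * (l1 - l3)) ((l3 - l4) * (l1 - l2)) ((l2 - l3) * (l1 - l4))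
    (hPP 0 2) (hPP 1 3) (hPP 0 1) (hPP 2 3) (hPP 0 3) (hPP 1 2) 0 x] at hE0
  -- rewrite all derivatives of u = pd 0 w and v = pd 1 w into canonical atoms
  have h10 : pd 1 (pd 0 w) = pd 0 (pd 1 w) := funext (pd_comm hw 1 0)
  have h20 : pd 2 (pd 0 w) = pd 0 (pd 2 w) := funext (pd_comm hw 2 0)
  have h30 : pd 3 (pd 0 w) = pd 0 (pd 3 w) := funext (pd_comm hw 3 0)
  rw [h10, h20, h30,
    pd_comm (hP 3) 2 0 x, pd_comm (hP 2) 1 0 x, pd_comm (hP 3) 1 0 x,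
    pd_comm hw 2 1 x, pd_comm hw 3 1 x]
  linear_combination (-(pd 0 (pd 1 w) x)) * hE0 + (pd 0 (pd 0 (pd 1 w)) x) * heav x
end

section
/- Let u, v : ℝ⁴ → ℝ be a smooth solution of the two-component system, and let a, b : ℝ² → ℝ be smooth nowhere vanishing functions. Define ũ(x¹,x²,x³,x⁴) = a(x¹, u(x))·u(x) and ṽ(x¹,x²,x³,x⁴) = b(x², v(x))·v(x). Then (ũ, ṽ) is also a solution of the two-component system. -/
/-- The two-component extension of the general heavenly equation for the pair `(u,v)`. -/
noncomputable def TwoComponentSystem (l1 l2 l3 l4 : ℝ) (u v : (Fin 4 → ℝ) → ℝ) : Prop :=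
  ∀ x,
    ((l3 - l4) * (l1 - l2) * (pd 0 v x * pd 1 u x * pd 2 (pd 3 u) x)
    + (l2 - l3) * (l1 - l4) * (pd 0 v x * pd 3 u x * pd 1 (pd 2 u) x
        - pd 2 v x * pd 3 u x * pd 0 (pd 1 u) x
        + pd 2 v x * pd 1 u x * pd 0 (pd 3 u) x)
    - (l2 - l4) * (l1 - l3) * (pd 0 v x * pd 2 u x * pd 1 (pd 3 u) x
        - pd 3 v x * pd 2 u x * pd 0 (pd 1 u) x
        + pd 3 v x * pd 1 u x * pd 0 (pd 2 u) x) = 0)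
    ∧
    ((l3 - l4) * (l1 - l2) * (pd 0 v x * pd 1 u x * pd 2 (pd 3 v) x)
    + (l2 - l3) * (l1 - l4) * (pd 0 v x * pd 3 u x * pd 1 (pd 2 v) x
        - pd 2 v x * pd 3 u x * pd 0 (pd 1 v) x
        + pd 2 v x * pd 1 u x * pd 0 (pd 3 v) x)
    - (l2 - l4) * (l1 - l3) * (pd 0 v x * pd 2 u x * pd 1 (pd 3 v) x
        - pd 3 v x * pd 2 u x * pd 0 (pd 1 v) x
        + pd 3 v x * pd 1 u x * pd 0 (pd 2 v) x) = 0)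

lemma contDiff_pd (g : (Fin 4 → ℝ) → ℝ) (hg : ContDiff ℝ (⊤ : ℕ∞) g) (j : Fin 4) :
    ContDiff ℝ (⊤ : ℕ∞) (pd j g) := by
  show ContDiff ℝ (⊤ : ℕ∞) (fun x => fderiv ℝ g x (Pi.single j 1))
  exact (ContinuousLinearMap.apply ℝ ℝ ((Pi.single j 1 : Fin 4 → ℝ))).contDiff.comp
    (hg.fderiv_right (by simp))

lemma contDiff_comp_pair (F : ℝ × ℝ → ℝ) (hF : ContDiff ℝ (⊤ : ℕ∞) F)
    (g : (Fin 4 → ℝ) → ℝ) (hg : ContDiff ℝ (⊤ : ℕ∞) g) (k : Fin 4) :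
    ContDiff ℝ (⊤ : ℕ∞) (fun y => F (y k, g y)) :=
  hF.comp (ContDiff.prodMk (ContinuousLinearMap.proj k : ((Fin 4 → ℝ)) →L[ℝ] ℝ).contDiff hg)

lemma pd_add (f g : (Fin 4 → ℝ) → ℝ) (hf : Differentiable ℝ f) (hg : Differentiable ℝ g)
    (i : Fin 4) (x : Fin 4 → ℝ) :
    pd i (fun y => f y + g y) x = pd i f x + pd i g x := by
  unfold pd
  rw [fderiv_fun_add (hf x) (hg x)]
  rfl

lemma pd_mul (f g : (Fin 4 → ℝ) → ℝ) (hf : Differentiable ℝ f) (hg : Differentiable ℝ g)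
    (i : Fin 4) (x : Fin 4 → ℝ) :
    pd i (fun y => f y * g y) x = pd i f x * g x + f x * pd i g x := by
  unfold pd
  rw [fderiv_fun_mul (hf x) (hg x)]
  simp [smul_eq_mul]
  ring

lemma pd_cmul (c : ℝ) (g : (Fin 4 → ℝ) → ℝ) (hg : Differentiable ℝ g)
    (i : Fin 4) (x : Fin 4 → ℝ) :
    pd i (fun y => c * g y) x = c * pd i g x := by
  unfold pd
  rw [fderiv_const_mul (hg x)]
  simp [smul_eq_mul]

lemma pdc (F : ℝ × ℝ → ℝ) (hF : ContDiff ℝ (⊤ : ℕ∞) F)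
    (g : (Fin 4 → ℝ) → ℝ) (hg : ContDiff ℝ (⊤ : ℕ∞) g) (k i : Fin 4) (x : Fin 4 → ℝ) :
    pd i (fun y => F (y k, g y)) x
      = (Pi.single i 1 : Fin 4 → ℝ) k * fderiv ℝ F (x k, g x) (1, 0)
        + pd i g x * fderiv ℝ F (x k, g x) (0, 1) := by
  have hw : HasFDerivAt (fun y : Fin 4 → ℝ => (y k, g y))
      ((ContinuousLinearMap.proj k).prod (fderiv ℝ g x)) x :=
    HasFDerivAt.prodMk ((ContinuousLinearMap.proj k : ((Fin 4 → ℝ)) →L[ℝ] ℝ).hasFDerivAt)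
      (hg.differentiable (by simp) x).hasFDerivAt
  have h : HasFDerivAt (fun y => F (y k, g y))
      ((fderiv ℝ F (x k, g x)).comp ((ContinuousLinearMap.proj k).prod (fderiv ℝ g x))) x :=
    ((hF.differentiable (by simp) _).hasFDerivAt).comp x hw
  show fderiv ℝ (fun y => F (y k, g y)) x (Pi.single i 1) = _
  rw [h.fderiv]
  simp only [ContinuousLinearMap.comp_apply, ContinuousLinearMap.prod_apply,
    ContinuousLinearMap.proj_apply]
  have hv : ((Pi.single i 1 : Fin 4 → ℝ) k, fderiv ℝ g x (Pi.single i 1))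
      = (Pi.single i 1 : Fin 4 → ℝ) k • ((1 : ℝ), (0 : ℝ))
        + (fderiv ℝ g x (Pi.single i 1)) • ((0 : ℝ), (1 : ℝ)) := by
    simp [Prod.ext_iff]
  rw [hv, map_add, map_smul, map_smul]
  simp [pd, smul_eq_mul]

lemma pdpdc (F : ℝ × ℝ → ℝ) (hF : ContDiff ℝ (⊤ : ℕ∞) F)
    (g : (Fin 4 → ℝ) → ℝ) (hg : ContDiff ℝ (⊤ : ℕ∞) g) (k i j : Fin 4) (x : Fin 4 → ℝ) :
    pd i (pd j (fun y => F (y k, g y))) x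
      = (Pi.single j 1 : Fin 4 → ℝ) k *
          ((Pi.single i 1 : Fin 4 → ℝ) k *
              fderiv ℝ (fun p => fderiv ℝ F p (1, 0)) (x k, g x) (1, 0)
            + pd i g x * fderiv ℝ (fun p => fderiv ℝ F p (1, 0)) (x k, g x) (0, 1))
        + (pd i (pd j g) x * fderiv ℝ F (x k, g x) (0, 1)
          + pd j g x *
            ((Pi.single i 1 : Fin 4 → ℝ) k *
                fderiv ℝ (fun p => fderiv ℝ F p (0, 1)) (x k, g x) (1, 0)
              + pd i g x * fderiv ℝ (fun p => fderiv ℝ F p (0, 1)) (x k, g x) (0, 1))) := by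
  have hFs : ContDiff ℝ (⊤ : ℕ∞) (fun p => fderiv ℝ F p (1, 0)) :=
    (ContinuousLinearMap.apply ℝ ℝ ((1, 0) : ℝ × ℝ)).contDiff.comp (hF.fderiv_right (by simp))
  have hFt : ContDiff ℝ (⊤ : ℕ∞) (fun p => fderiv ℝ F p (0, 1)) :=
    (ContinuousLinearMap.apply ℝ ℝ ((0, 1) : ℝ × ℝ)).contDiff.comp (hF.fderiv_right (by simp))
  have h1 : pd j (fun y => F (y k, g y))
      = fun y => (Pi.single j 1 : Fin 4 → ℝ) k * (fun p => fderiv ℝ F p (1, 0)) (y k, g y)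
          + pd j g y * (fun p => fderiv ℝ F p (0, 1)) (y k, g y) :=
    funext fun y => pdc F hF g hg k j y
  rw [h1]
  have d1 : Differentiable ℝ (fun y : Fin 4 → ℝ =>
      (Pi.single j 1 : Fin 4 → ℝ) k * (fun p => fderiv ℝ F p (1, 0)) (y k, g y)) :=
    ((contDiff_comp_pair _ hFs g hg k).differentiable (by simp)).const_mul _
  have d2a : Differentiable ℝ (pd j g) := (contDiff_pd g hg j).differentiable (by simp)
  have d2b : Differentiable ℝ (fun y : Fin 4 → ℝ => (fun p => fderiv ℝ F p (0, 1)) (y k, g y)) :=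
    (contDiff_comp_pair _ hFt g hg k).differentiable (by simp)
  have d2 : Differentiable ℝ (fun y : Fin 4 → ℝ =>
      pd j g y * (fun p => fderiv ℝ F p (0, 1)) (y k, g y)) := d2a.mul d2b
  rw [pd_add _ _ d1 d2 i x,
    pd_cmul _ _ ((contDiff_comp_pair _ hFs g hg k).differentiable (by simp)) i x,
    pd_mul _ _ d2a d2b i x, pdc _ hFs g hg k i x, pdc _ hFt g hg k i x]

lemma fderiv_swap (F : ℝ × ℝ → ℝ) (hF : ContDiff ℝ (⊤ : ℕ∞) F) (p : ℝ × ℝ) :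
    fderiv ℝ (fun q => fderiv ℝ F q ((1 : ℝ), (0 : ℝ))) p (0, 1)
      = fderiv ℝ (fun q => fderiv ℝ F q ((0 : ℝ), (1 : ℝ))) p (1, 0) := by
  have hd : Differentiable ℝ (fderiv ℝ F) := (hF.fderiv_right (m := 1) (WithTop.coe_le_coe.mpr le_top)).differentiable one_ne_zero
  have key : ∀ v w : ℝ × ℝ, fderiv ℝ (fun q => fderiv ℝ F q v) p w
      = fderiv ℝ (fderiv ℝ F) p w v := by
    intro v w
    have hc : (fun q => fderiv ℝ F q v)
        = (ContinuousLinearMap.apply ℝ ℝ v) ∘ fderiv ℝ F := rfl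
    rw [hc, fderiv_comp p (ContinuousLinearMap.apply ℝ ℝ v).differentiableAt (hd p),
      ContinuousLinearMap.fderiv]
    rfl
  rw [key, key]
  exact second_derivative_symmetric
    (fun y => ((hF.differentiable (by simp)) y).hasFDerivAt) ((hd p).hasFDerivAt) _ _

theorem stmt3 (l1 l2 l3 l4 : ℝ)
    (hd : l1 ≠ l2 ∧ l1 ≠ l3 ∧ l1 ≠ l4 ∧ l2 ≠ l3 ∧ l2 ≠ l4 ∧ l3 ≠ l4)
    (u v : (Fin 4 → ℝ) → ℝ) (hu : ContDiff ℝ (⊤ : ℕ∞) u) (hv : ContDiff ℝ (⊤ : ℕ∞) v)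
    (hsol : TwoComponentSystem l1 l2 l3 l4 u v)
    (a b : ℝ × ℝ → ℝ) (ha : ContDiff ℝ (⊤ : ℕ∞) a) (hb : ContDiff ℝ (⊤ : ℕ∞) b)
    (ha0 : ∀ p, a p ≠ 0) (hb0 : ∀ p, b p ≠ 0)
    (utld vtld : (Fin 4 → ℝ) → ℝ)
    (hut : ∀ x, utld x = a (x 0, u x) * u x)
    (hvt : ∀ x, vtld x = b (x 1, v x) * v x) :
    TwoComponentSystem l1 l2 l3 l4 utld vtld := by
  have hAc : ContDiff ℝ (⊤ : ℕ∞) (fun p : ℝ × ℝ => a p * p.2) := ha.mul contDiff_snd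
  have hBc : ContDiff ℝ (⊤ : ℕ∞) (fun p : ℝ × ℝ => b p * p.2) := hb.mul contDiff_snd
  have hUT : utld = fun y => (fun p : ℝ × ℝ => a p * p.2) (y 0, u y) :=
    funext fun y => hut y
  have hVT : vtld = fun y => (fun p : ℝ × ℝ => b p * p.2) (y 1, v y) :=
    funext fun y => hvt y
  unfold TwoComponentSystem at hsol ⊢
  intro x
  obtain ⟨h1, h2⟩ := hsol x
  rw [hUT, hVT]
  have hswap := fderiv_swap _ hBc (x 1, v x)
  constructor
  · simp only [pdpdc _ hAc u hu 0, pdc _ hAc u hu 0, pdc _ hBc v hv 1, Pi.single_apply]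
    simp only [Fin.isValue, Fin.reduceEq, reduceIte, mul_zero, zero_mul, mul_one, one_mul, add_zero, zero_add]
    linear_combination (fderiv ℝ (fun p : ℝ × ℝ => b p * p.2) (x 1, v x) (0, 1)
      * fderiv ℝ (fun p : ℝ × ℝ => a p * p.2) (x 0, u x) (0, 1)
      * fderiv ℝ (fun p : ℝ × ℝ => a p * p.2) (x 0, u x) (0, 1)) * h1
  · simp only [pdpdc _ hBc v hv 1, pdc _ hAc u hu 0, pdc _ hBc v hv 1, Pi.single_apply]
    simp only [Fin.isValue, Fin.reduceEq, reduceIte, mul_zero, zero_mul, mul_one, one_mul, add_zero, zero_add]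
    rw [hswap]
    linear_combination (fderiv ℝ (fun p : ℝ × ℝ => b p * p.2) (x 1, v x) (0, 1)
      * fderiv ℝ (fun p : ℝ × ℝ => b p * p.2) (x 1, v x) (0, 1)
      * fderiv ℝ (fun p : ℝ × ℝ => a p * p.2) (x 0, u x) (0, 1)) * h2
end
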